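/- Let ψ : [0,∞) → ℝ admit a Sawi transform T(s) at s > 0 (with suitable integrability), and define the Prabhakar fractional integral I_{α,ρ,ω}^γ ψ(t) = ∫₀^t (t−τ)^(ρ−1)·E_{α,ρ}^γ(ω(t−τ)^α)·ψ(τ) dτ for α, ρ > 0. Then for s > 0 with |ω·s^α| < 1, Sa[I_{α,ρ,ω}^γ ψ](s) = s^ρ·(1−ω·s^α)^(−γ)·T(s). -/

import Mathlib

open MeasureTheory Real Set

/-- The Sawi transform of `ψ` at `s`. -/
noncomputable def Sawi (ψ : ℝ → ℝ) (s : ℝ) : ℝ :=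
  (1 / s ^ 2) * ∫ t in Ioi (0 : ℝ), ψ t * Real.exp (-t / s)

/-- The three-parameter Mittag-Leffler (Prabhakar) function. -/
noncomputable def prabhakarML (α ρ γ z : ℝ) : ℝ :=
  ∑' k : ℕ, (ascPochhammer ℝ k).eval γ * z ^ k /
    (Real.Gamma (α * k + ρ) * (Nat.factorial k))

/-- The Prabhakar fractional integral. -/
noncomputable def prabhakarIntegral (α ρ γ ω : ℝ) (ψ : ℝ → ℝ) (t : ℝ) : ℝ :=
  ∫ τ in (0 : ℝ)..t, (t - τ) ^ (ρ - 1) * prabhakarML α ρ γ (ω * (t - τ) ^ α) * ψ τ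

/-!
Expanding the Mittag-Leffler function, the kernel `t ^ (ρ - 1) * E(ω t ^ α)` becomes a series of
powers `t ^ (α k + ρ - 1)`, whose weighted integrals against `exp (-t / s)` are Gamma integrals
`Γ(α k + ρ) s ^ (α k + ρ)`. The Gamma factors cancel those of the Mittag-Leffler coefficients, so
the kernel's transform is `s ^ ρ ∑ (γ)_k / k! (ω s ^ α) ^ k`, the binomial series of
`s ^ ρ (1 - ω s ^ α) ^ (-γ)`; for `|ω s ^ α| < 1` it converges absolutely, which justifies the
termwise integration. The Prabhakar integral is the convolution of this kernel with `ψ` on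
`[0, ∞)`, and since `exp (-t / s)` is multiplicative in `t`, Fubini factors its transform.
-/

open scoped Nat ENNReal Convolution

theorem MeasureTheory.integrable_tsum_of_summable_integral_norm {α E : Type*}
    [MeasurableSpace α] {μ : Measure α} [NormedAddCommGroup E] [CompleteSpace E]
    {ι : Type*} [Countable ι] {F : ι → α → E}
    (hF_int : ∀ i, Integrable (F i) μ) (hF_sum : Summable fun i ↦ ∫ a, ‖F i a‖ ∂μ) :
    Integrable (fun a ↦ ∑' i, F i a) μ := by
  have hsum : ∑' i, ‖(hF_int i).toL1 (F i)‖ₑ ≠ ∞ := by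
    refine tsum_enorm_ne_top_iff_summable_norm.2 ?_
    simpa only [L1.norm_of_fun_eq_integral_norm] using hF_sum
  have hcoe : ∀ᵐ a ∂μ, ∀ i, (hF_int i).toL1 (F i) a = F i a :=
    ae_all_iff.2 fun i ↦ Integrable.coeFn_toL1 (hF_int i)
  refine (L1.integrable_coeFn _).congr ((Lp.coeFn_tsum hsum).trans ?_)
  filter_upwards [hcoe] with a ha
  exact tsum_congr ha

lemma integrableOn_rpow_mul_exp_neg_div {β s : ℝ} (hβ : 0 < β) (hs : 0 < s) :
    IntegrableOn (fun u ↦ u ^ (β - 1) * exp (-u / s)) (Ioi 0) := by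
  have := integrableOn_rpow_mul_exp_neg_mul_rpow (p := 1) (by linarith : -1 < β - 1) one_pos
    (inv_pos.mpr hs)
  refine this.congr_fun (fun u _ ↦ ?_) measurableSet_Ioi
  simp only [Real.rpow_one, neg_mul, div_eq_inv_mul, mul_neg]

lemma integral_rpow_mul_exp_neg_div {β s : ℝ} (hβ : 0 < β) (hs : 0 < s) :
    ∫ u in Ioi 0, u ^ (β - 1) * exp (-u / s) = Gamma β * s ^ β := by
  have := integral_rpow_mul_exp_neg_mul_Ioi hβ (inv_pos.mpr hs)
  rw [one_div, inv_inv] at this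
  simp only [div_eq_inv_mul, mul_neg]
  rw [this, mul_comm]

lemma integral_norm_mul_rpow_mul_exp_neg_div (c : ℝ) {β s : ℝ} (hβ : 0 < β) (hs : 0 < s) :
    ∫ u in Ioi 0, ‖c * (u ^ (β - 1) * exp (-u / s))‖ = |c| * (Gamma β * s ^ β) := by
  rw [← integral_rpow_mul_exp_neg_div hβ hs, ← integral_const_mul]
  refine setIntegral_congr_fun measurableSet_Ioi fun u (hu : 0 < u) ↦ ?_
  rw [norm_mul, Real.norm_eq_abs, Real.norm_of_nonneg (by positivity)]

lemma ascPochhammer_eval_div_factorial_eq_choose (γ : ℝ) (k : ℕ) :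
    (ascPochhammer ℝ k).eval γ / k ! = Ring.choose (γ + k - 1) k := by
  rw [Ring.choose_eq_smul, Polynomial.descPochhammer_smeval_eq_ascPochhammer,
    Polynomial.ascPochhammer_smeval_eq_eval, smul_eq_mul, inv_mul_eq_div]
  ring_nf

lemma hasSum_ascPochhammer_div_factorial_mul_pow (γ : ℝ) {x : ℝ} (hx : |x| < 1) :
    HasSum (fun k ↦ (ascPochhammer ℝ k).eval γ / k ! * x ^ k) ((1 - x) ^ (-γ)) := by
  have hx' : x ∈ Metric.eball (0 : ℝ) 1 := by
    simpa [Metric.mem_eball, edist_dist] using hx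
  have := (Real.one_div_one_sub_rpow_hasFPowerSeriesOnBall_zero γ).hasSum hx'
  simp only [FormalMultilinearSeries.ofScalars_apply_eq, smul_eq_mul, zero_add,
    ← ascPochhammer_eval_div_factorial_eq_choose] at this
  rwa [Real.rpow_neg (by linarith [abs_lt.mp hx]), inv_eq_one_div]

lemma summable_norm_ascPochhammer_div_factorial_mul_pow (γ : ℝ) {x : ℝ} (hx : |x| < 1) :
    Summable (fun k ↦ ‖(ascPochhammer ℝ k).eval γ / k ! * x ^ k‖) := by
  have hr : ((‖x‖₊ : NNReal) : ENNReal) < (FormalMultilinearSeries.ofScalars ℝ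
      fun n ↦ Ring.choose (γ + n - 1) n).radius :=
    lt_of_lt_of_le (by simpa [← NNReal.coe_lt_coe] using hx)
      (Real.one_div_one_sub_rpow_hasFPowerSeriesOnBall_zero γ).r_le
  convert FormalMultilinearSeries.summable_norm_mul_pow _ hr using 2 with k
  rw [FormalMultilinearSeries.ofScalars_norm, ascPochhammer_eval_div_factorial_eq_choose]
  simp [norm_mul, norm_pow]

section TermwiseLaplace

variable {a β : ℕ → ℝ} {s : ℝ}

lemma integrableOn_tsum_mul_rpow_mul_exp_neg_div (hβ : ∀ k, 0 < β k) (hs : 0 < s)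
    (hsum : Summable fun k ↦ |a k| * (Gamma (β k) * s ^ β k)) :
    IntegrableOn (fun u ↦ ∑' k, a k * (u ^ (β k - 1) * exp (-u / s))) (Ioi 0) :=
  integrable_tsum_of_summable_integral_norm
    (fun k ↦ (integrableOn_rpow_mul_exp_neg_div (hβ k) hs).const_mul (a k))
    (by simpa only [integral_norm_mul_rpow_mul_exp_neg_div _ (hβ _) hs] using hsum)

lemma integral_tsum_mul_rpow_mul_exp_neg_div (hβ : ∀ k, 0 < β k) (hs : 0 < s)
    (hsum : Summable fun k ↦ |a k| * (Gamma (β k) * s ^ β k)) :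
    ∫ u in Ioi 0, ∑' k, a k * (u ^ (β k - 1) * exp (-u / s))
      = ∑' k, a k * (Gamma (β k) * s ^ β k) := by
  rw [← integral_tsum_of_summable_integral_norm
    (fun k ↦ (integrableOn_rpow_mul_exp_neg_div (hβ k) hs).const_mul (a k))
    (by simpa only [integral_norm_mul_rpow_mul_exp_neg_div _ (hβ _) hs] using hsum)]
  simp only [integral_const_mul, integral_rpow_mul_exp_neg_div (hβ _) hs]

end TermwiseLaplace

/-- The kernel `e^γ_{α,ρ,ω}` of the Prabhakar integral. -/
noncomputable def prabhakarKernel (α ρ γ ω t : ℝ) : ℝ :=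
  t ^ (ρ - 1) * prabhakarML α ρ γ (ω * t ^ α)

noncomputable def prabhakarCoeff (α ρ γ ω : ℝ) (k : ℕ) : ℝ :=
  (ascPochhammer ℝ k).eval γ * ω ^ k / (Gamma (α * k + ρ) * k !)

section PrabhakarKernel

variable {α ρ γ ω s : ℝ}

lemma prabhakarKernel_mul_exp_eq_tsum {u : ℝ} (hu : 0 < u) :
    prabhakarKernel α ρ γ ω u * exp (-u / s)
      = ∑' k : ℕ, prabhakarCoeff α ρ γ ω k * (u ^ (α * k + ρ - 1) * exp (-u / s)) := by
  rw [prabhakarKernel, prabhakarML, mul_comm (u ^ (ρ - 1)), mul_assoc, ← tsum_mul_right]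
  refine tsum_congr fun k ↦ ?_
  rw [prabhakarCoeff, mul_pow, ← Real.rpow_natCast (u ^ α), ← Real.rpow_mul hu.le,
    add_sub_assoc, Real.rpow_add hu]
  ring

lemma prabhakarCoeff_mul_gamma_mul_rpow (hα : 0 ≤ α) (hρ : 0 < ρ) (hs : 0 < s) (k : ℕ) :
    prabhakarCoeff α ρ γ ω k * (Gamma (α * k + ρ) * s ^ (α * k + ρ))
      = s ^ ρ * ((ascPochhammer ℝ k).eval γ / k ! * (ω * s ^ α) ^ k) := by
  have hΓ : Gamma (α * k + ρ) ≠ 0 := (Gamma_pos_of_pos (by positivity)).ne'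
  rw [prabhakarCoeff, Real.rpow_add hs, mul_pow, ← Real.rpow_natCast (s ^ α),
    ← Real.rpow_mul hs.le]
  field_simp

lemma abs_prabhakarCoeff_mul_gamma_mul_rpow (hα : 0 ≤ α) (hρ : 0 < ρ) (hs : 0 < s) (k : ℕ) :
    |prabhakarCoeff α ρ γ ω k| * (Gamma (α * k + ρ) * s ^ (α * k + ρ))
      = s ^ ρ * ‖(ascPochhammer ℝ k).eval γ / k ! * (ω * s ^ α) ^ k‖ := by
  have hpos : 0 < Gamma (α * k + ρ) * s ^ (α * k + ρ) :=
    mul_pos (Gamma_pos_of_pos (by positivity)) (by positivity)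
  rw [← abs_of_pos hpos, ← abs_mul, prabhakarCoeff_mul_gamma_mul_rpow hα hρ hs, abs_mul,
    abs_of_pos (by positivity), Real.norm_eq_abs]

lemma summable_abs_prabhakarCoeff_mul_gamma_mul_rpow (hα : 0 ≤ α) (hρ : 0 < ρ) (hs : 0 < s)
    (hω : |ω * s ^ α| < 1) :
    Summable fun k : ℕ ↦ |prabhakarCoeff α ρ γ ω k| * (Gamma (α * k + ρ) * s ^ (α * k + ρ)) := by
  simpa only [abs_prabhakarCoeff_mul_gamma_mul_rpow hα hρ hs] using
    (summable_norm_ascPochhammer_div_factorial_mul_pow γ hω).mul_left (s ^ ρ)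

lemma integrableOn_prabhakarKernel_mul_exp (hα : 0 ≤ α) (hρ : 0 < ρ) (hs : 0 < s)
    (hω : |ω * s ^ α| < 1) :
    IntegrableOn (fun u ↦ prabhakarKernel α ρ γ ω u * exp (-u / s)) (Ioi 0) :=
  (integrableOn_tsum_mul_rpow_mul_exp_neg_div (fun k ↦ by positivity) hs
    (summable_abs_prabhakarCoeff_mul_gamma_mul_rpow hα hρ hs hω)).congr_fun
    (fun _ hu ↦ (prabhakarKernel_mul_exp_eq_tsum hu).symm) measurableSet_Ioi

lemma integral_prabhakarKernel_mul_exp (hα : 0 ≤ α) (hρ : 0 < ρ) (hs : 0 < s)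
    (hω : |ω * s ^ α| < 1) :
    ∫ u in Ioi 0, prabhakarKernel α ρ γ ω u * exp (-u / s) = s ^ ρ * (1 - ω * s ^ α) ^ (-γ) := by
  rw [setIntegral_congr_fun measurableSet_Ioi fun _ hu ↦ prabhakarKernel_mul_exp_eq_tsum hu,
    integral_tsum_mul_rpow_mul_exp_neg_div (fun k ↦ by positivity) hs
      (summable_abs_prabhakarCoeff_mul_gamma_mul_rpow hα hρ hs hω)]
  simp only [prabhakarCoeff_mul_gamma_mul_rpow hα hρ hs]
  rw [tsum_mul_left, (hasSum_ascPochhammer_div_factorial_mul_pow γ hω).tsum_eq]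

end PrabhakarKernel

lemma indicator_mul_exp_mul_indicator_mul_exp_sub (f g : ℝ → ℝ) (s t τ : ℝ) :
    (Ioi 0).indicator (fun τ ↦ g τ * exp (-τ / s)) τ
        * (Ioi 0).indicator (fun u ↦ f u * exp (-u / s)) (t - τ)
      = (Ioo 0 t).indicator (fun τ ↦ f (t - τ) * g τ * exp (-t / s)) τ := by
  by_cases hτ : 0 < τ
  · by_cases htτ : τ < t
    · have hexp : exp (-τ / s) * exp (-(t - τ) / s) = exp (-t / s) := by
        rw [← exp_add]; ring_nf
      rw [indicator_of_mem (show τ ∈ Ioi 0 from hτ),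
        indicator_of_mem (show t - τ ∈ Ioi 0 from sub_pos.mpr htτ),
        indicator_of_mem (show τ ∈ Ioo 0 t from ⟨hτ, htτ⟩), ← hexp]
      ring
    · rw [indicator_of_notMem (show t - τ ∉ Ioi 0 by simpa using htτ),
        indicator_of_notMem (show τ ∉ Ioo 0 t from fun h ↦ htτ h.2), mul_zero]
  · rw [indicator_of_notMem (show τ ∉ Ioi 0 from hτ),
      indicator_of_notMem (show τ ∉ Ioo 0 t from fun h ↦ hτ h.1), zero_mul]

lemma convolution_indicator_mul_exp (f g : ℝ → ℝ) (s t : ℝ) :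
    ((Ioi 0).indicator (fun τ ↦ g τ * exp (-τ / s))
        ⋆[ContinuousLinearMap.mul ℝ ℝ] (Ioi 0).indicator (fun u ↦ f u * exp (-u / s))) t
      = (Ioi 0).indicator (fun t ↦ (∫ τ in 0..t, f (t - τ) * g τ) * exp (-t / s)) t := by
  simp only [convolution_def, ContinuousLinearMap.mul_apply',
    indicator_mul_exp_mul_indicator_mul_exp_sub, integral_indicator measurableSet_Ioo,
    integral_mul_const]
  by_cases ht : 0 < t
  · rw [indicator_of_mem (show t ∈ Ioi 0 from ht), intervalIntegral.integral_of_le ht.le,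
      integral_Ioc_eq_integral_Ioo]
  · rw [indicator_of_notMem (show t ∉ Ioi 0 from ht), Ioo_eq_empty ht, Measure.restrict_empty,
      integral_zero_measure, zero_mul]

section SawiConvolution

variable {f g : ℝ → ℝ} {s : ℝ}

lemma integral_Ioi_intervalIntegral_mul_exp
    (hf : IntegrableOn (fun u ↦ f u * exp (-u / s)) (Ioi 0))
    (hg : IntegrableOn (fun τ ↦ g τ * exp (-τ / s)) (Ioi 0)) :
    ∫ t in Ioi 0, (∫ τ in 0..t, f (t - τ) * g τ) * exp (-t / s)
      = (∫ u in Ioi 0, f u * exp (-u / s)) * ∫ τ in Ioi 0, g τ * exp (-τ / s) := by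
  rw [← integral_indicator measurableSet_Ioi]
  simp only [← convolution_indicator_mul_exp]
  rw [integral_convolution _ (hg.integrable_indicator measurableSet_Ioi)
      (hf.integrable_indicator measurableSet_Ioi), integral_indicator measurableSet_Ioi,
    integral_indicator measurableSet_Ioi, ContinuousLinearMap.mul_apply', mul_comm]

lemma sawi_intervalIntegral_convolution (hs : s ≠ 0)
    (hf : IntegrableOn (fun u ↦ f u * exp (-u / s)) (Ioi 0))
    (hg : IntegrableOn (fun τ ↦ g τ * exp (-τ / s)) (Ioi 0)) :
    Sawi (fun t ↦ ∫ τ in 0..t, f (t - τ) * g τ) s = s ^ 2 * Sawi f s * Sawi g s := by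
  rw [Sawi, Sawi, Sawi, integral_Ioi_intervalIntegral_mul_exp hf hg]
  field_simp

end SawiConvolution

theorem sawi_prabhakarIntegral_general (α ρ γ ω s : ℝ) (ψ : ℝ → ℝ)
    (hα : 0 < α) (hρ : 0 < ρ) (hs : 0 < s) (hω : |ω * s ^ α| < 1)
    (hψ : IntegrableOn (fun t => ψ t * Real.exp (-t / s)) (Ioi (0 : ℝ))) :
    Sawi (prabhakarIntegral α ρ γ ω ψ) s
      = s ^ ρ * (1 - ω * s ^ α) ^ (-γ) * Sawi ψ s := by
  have hconv : Sawi (prabhakarIntegral α ρ γ ω ψ) s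
      = s ^ 2 * Sawi (prabhakarKernel α ρ γ ω) s * Sawi ψ s :=
    sawi_intervalIntegral_convolution hs.ne'
      (integrableOn_prabhakarKernel_mul_exp hα.le hρ hs hω) hψ
  rw [hconv, Sawi, integral_prabhakarKernel_mul_exp hα.le hρ hs hω]
  field_simp

theorem sawi_prabhakarIntegral (α ρ γ ω s : ℝ) (ψ : ℝ → ℝ)
    (hα : 0 < α) (hρ : 0 < ρ) (hs : 0 < s) (hω : |ω * s ^ α| < 1)
    (hψ : IntegrableOn (fun t => ψ t * Real.exp (-t / s)) (Ioi (0 : ℝ)))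
    (hPI : IntegrableOn
      (fun t => prabhakarIntegral α ρ γ ω ψ t * Real.exp (-t / s)) (Ioi (0 : ℝ))) :
    Sawi (prabhakarIntegral α ρ γ ω ψ) s
      = s ^ ρ * (1 - ω * s ^ α) ^ (-γ) * Sawi ψ s :=
  sawi_prabhakarIntegral_general α ρ γ ω s ψ hα hρ hs hω hψ
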